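/- arXiv:2201.12294 — 2 statements merged into one kernel-verified Lean document; each statement's English description precedes it below -/
import Mathlib

section
/- Let φ : (−∞, u*] × [V₀, 1) → ℝ and r, Ω², ϖ be C¹ functions satisfying ∂_u ϖ = −(2 r² ∂_V r / Ω²)(∂_u φ)², with ∂_V r < 0, Ω² > 0, r ≥ r_min > 0 on the domain. Suppose there exist u₁ < u₀ < u₂ ≤ u* and a > 0 with liminf_{V→1} (∂_u φ)²(u,V) ≥ a for all u ∈ [u₁,u₂], and lim_{V→1} (−∂_V r/Ω²)(u,V) = +∞ for each u. If additionally ϖ(u₁, V) is bounded below uniformly in V, then limsup_{V→1} ϖ(u₂, V) = +∞. -/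
/-!
Along each slice `V ∈ [V₀, 1)` the mass `ϖ(·, V)` is nondecreasing, so it is the integral of its
derivative and `ϖ(u₂, V) - ϖ(u₁, V) = ∫_{u₁}^{u₂} ∂_u ϖ(u, V) du`. For each `u` the integrand
`2 r² (−∂_V r / Ω²) (∂_u φ)²` tends to `+∞` as `V → 1`, being at least `2 r_min² · (a/2)` times a
factor tending to `+∞`. By Fatou's lemma the integrals tend to `+∞`, and since `ϖ(u₁, ·)` is bounded
below, so does `ϖ(u₂, ·)`.
-/

open Filter MeasureTheory Set Topology
open scoped ENNReal

section Fatou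

variable {α ι : Type*} [MeasurableSpace α] {μ : Measure α} {l : Filter ι} [l.IsCountablyGenerated]

theorem tendsto_lintegral_nhds_top_of_ae_tendsto_nhds_top {f : ι → α → ℝ≥0∞} (hμ : μ ≠ 0)
    (hf : ∀ i, AEMeasurable (f i) μ) (h : ∀ᵐ x ∂μ, Tendsto (fun i => f i x) l (𝓝 ∞)) :
    Tendsto (fun i => ∫⁻ x, f i x ∂μ) l (𝓝 ∞) := by
  rcases l.eq_or_neBot with rfl | _
  · exact tendsto_bot
  have hliminf : ∫⁻ x, liminf (fun i => f i x) l ∂μ = ∞ := by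
    rw [lintegral_congr_ae (h.mono fun x hx => hx.liminf_eq), lintegral_const,
      ENNReal.top_mul (Measure.measure_univ_ne_zero.2 hμ)]
  exact tendsto_of_le_liminf_of_limsup_le (hliminf ▸ lintegral_liminf_le' hf) le_top

theorem tendsto_integral_atTop_of_ae_tendsto_atTop {g : ι → α → ℝ} (hμ : μ ≠ 0)
    (hg : ∀ i, AEMeasurable (g i) μ) (hint : ∀ᶠ i in l, Integrable (g i) μ)
    (hnonneg : ∀ᶠ i in l, 0 ≤ᵐ[μ] g i) (h : ∀ᵐ x ∂μ, Tendsto (fun i => g i x) l atTop) :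
    Tendsto (fun i => ∫ x, g i x ∂μ) l atTop := by
  rw [← ENNReal.tendsto_ofReal_nhds_top]
  refine (tendsto_lintegral_nhds_top_of_ae_tendsto_nhds_top hμ
    (fun i => (hg i).ennreal_ofReal) ?_).congr' ?_
  · exact h.mono fun x hx => ENNReal.tendsto_ofReal_nhds_top.2 hx
  · filter_upwards [hint, hnonneg] with i hi hi'
    exact (ofReal_integral_eq_lintegral_ofReal hi hi').symm

end Fatou

theorem Filter.Tendsto.atTop_mul_of_eventually_ge {ι : Type*} {l : Filter ι} {f g : ι → ℝ}
    {c : ℝ} (hf : Tendsto f l atTop) (hc : 0 < c) (hg : ∀ᶠ i in l, c ≤ g i) :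
    Tendsto (fun i => f i * g i) l atTop := by
  refine tendsto_atTop_mono' l ?_ (hf.atTop_mul_const hc)
  filter_upwards [hg, hf.eventually_ge_atTop 0] with i hgi hfi
  exact mul_le_mul_of_nonneg_left hgi hfi

section NonnegDeriv

variable {f : ℝ → ℝ} {a b : ℝ}

theorem integrableOn_Ioc_deriv_of_deriv_nonneg (hf : ∀ x ∈ Icc a b, DifferentiableAt ℝ f x)
    (hf' : ∀ x ∈ Ioo a b, 0 ≤ deriv f x) : IntegrableOn (deriv f) (Ioc a b) :=
  intervalIntegral.integrableOn_deriv_of_nonneg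
    (fun x hx => (hf x hx).continuousAt.continuousWithinAt)
    (fun x hx => (hf x (Ioo_subset_Icc_self hx)).hasDerivAt) hf'

theorem integral_Ioc_deriv_of_deriv_nonneg (hab : a ≤ b)
    (hf : ∀ x ∈ Icc a b, DifferentiableAt ℝ f x) (hf' : ∀ x ∈ Ioo a b, 0 ≤ deriv f x) :
    ∫ x in Ioc a b, deriv f x = f b - f a := by
  rw [← intervalIntegral.integral_of_le hab]
  exact intervalIntegral.integral_eq_sub_of_hasDerivAt_of_le hab
    (fun x hx => (hf x hx).continuousAt.continuousWithinAt)
    (fun x hx => (hf x (Ioo_subset_Icc_self hx)).hasDerivAt)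
    ((intervalIntegrable_iff_integrableOn_Ioc_of_le hab).2
      (integrableOn_Ioc_deriv_of_deriv_nonneg hf hf'))

theorem tendsto_sub_atTop_of_tendsto_deriv_atTop {ι : Type*} {l : Filter ι}
    [l.IsCountablyGenerated] {F : ι → ℝ → ℝ} (hab : a < b)
    (hF : ∀ᶠ i in l, ∀ x ∈ Icc a b, DifferentiableAt ℝ (F i) x)
    (hF' : ∀ᶠ i in l, ∀ x ∈ Ioo a b, 0 ≤ deriv (F i) x)
    (h : ∀ x ∈ Ioo a b, Tendsto (fun i => deriv (F i) x) l atTop) :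
    Tendsto (fun i => F i b - F i a) l atTop := by
  have hint : Tendsto (fun i => ∫ x in Ioo a b, deriv (F i) x) l atTop :=
    tendsto_integral_atTop_of_ae_tendsto_atTop (by simp [Measure.restrict_eq_zero, hab])
      (fun i => (measurable_deriv _).aemeasurable)
      (hF.and hF' |>.mono fun i hi =>
        (integrableOn_Ioc_deriv_of_deriv_nonneg hi.1 hi.2).mono_set Ioo_subset_Ioc_self)
      (hF'.mono fun i hi => ae_restrict_of_forall_mem measurableSet_Ioo hi)
      (ae_restrict_of_forall_mem measurableSet_Ioo h)
  refine hint.congr' ?_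
  filter_upwards [hF, hF'] with i hi hi'
  rw [← integral_Ioc_eq_integral_Ioo, integral_Ioc_deriv_of_deriv_nonneg hab.le hi hi']

end NonnegDeriv

/-- `∂_u ϖ = −(2 r² ∂_V r / Ω²)(∂_u φ)²`, as a function of `r, ∂_V r, Ω², ∂_u φ`. -/
noncomputable def massFlux (r dVr Ωsq duφ : ℝ) : ℝ :=
  -(2 * r ^ 2 * dVr / Ωsq) * duφ ^ 2

theorem massFlux_eq (r dVr Ωsq duφ : ℝ) :
    massFlux r dVr Ωsq duφ = -dVr / Ωsq * (2 * r ^ 2) * duφ ^ 2 := by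
  unfold massFlux
  ring

theorem massFlux_nonneg {r dVr Ωsq : ℝ} (hdVr : dVr < 0) (hΩsq : 0 < Ωsq) (duφ : ℝ) :
    0 ≤ massFlux r dVr Ωsq duφ := by
  have : 0 ≤ -dVr / Ωsq := div_nonneg (neg_nonneg.2 hdVr.le) hΩsq.le
  rw [massFlux_eq]
  positivity

theorem tendsto_massFlux_atTop {ι : Type*} {l : Filter ι} {r dVr Ωsq duφ : ι → ℝ} {rmin a : ℝ}
    (hrmin : 0 < rmin) (ha : 0 < a) (hr : ∀ᶠ i in l, rmin ≤ r i)
    (hduφ : a ≤ liminf (fun i => duφ i ^ 2) l) (hK : Tendsto (fun i => -dVr i / Ωsq i) l atTop) :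
    Tendsto (fun i => massFlux (r i) (dVr i) (Ωsq i) (duφ i)) l atTop := by
  have hr2 : ∀ᶠ i in l, 2 * rmin ^ 2 ≤ 2 * r i ^ 2 :=
    hr.mono fun i hi => by gcongr
  have hduφ2 : ∀ᶠ i in l, a / 2 ≤ duφ i ^ 2 :=
    (eventually_lt_of_lt_liminf ((half_lt_self ha).trans_le hduφ)
      (isBoundedUnder_of ⟨0, fun i => sq_nonneg _⟩)).mono fun i hi => hi.le
  simpa only [massFlux_eq] using
    ((hK.atTop_mul_of_eventually_ge (by positivity) hr2).atTop_mul_of_eventually_ge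
      (half_pos ha) hduφ2)

/-- abstract mass inflation criterion. If
`∂_u ϖ = −(2 r² ∂_V r / Ω²)(∂_u φ)²` with `∂_V r < 0`, `Ω² > 0`,
`r ≥ r_min > 0`, if `liminf_{V→1⁻} (∂_u φ)² ≥ a > 0` on `[u₁,u₂]`,
`−∂_V r / Ω² → +∞` as `V → 1⁻`, and `ϖ(u₁,·)` is bounded below, then
`limsup_{V→1⁻} ϖ(u₂, V) = +∞`. -/
theorem mass_inflation_criterion (ustar V₀ rmin u₁ u₀ u₂ a : ℝ)
    (φ r Ωsq ϖ : ℝ → ℝ → ℝ)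
    (hV₀ : V₀ < 1) (hrmin : 0 < rmin)
    (hu₁ : u₁ < u₀) (hu₀ : u₀ < u₂) (hu₂ : u₂ ≤ ustar) (ha : 0 < a)
    (h_eq : ∀ u : ℝ, u ≤ ustar → ∀ V ∈ Set.Ico V₀ (1 : ℝ),
      HasDerivAt (fun u' => ϖ u' V)
        (-(2 * (r u V) ^ 2 * deriv (r u) V / Ωsq u V)
          * (deriv (fun u' => φ u' V) u) ^ 2) u)
    (h_dVr_neg : ∀ u : ℝ, u ≤ ustar → ∀ V ∈ Set.Ico V₀ (1 : ℝ), deriv (r u) V < 0)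
    (hΩ_pos : ∀ u : ℝ, u ≤ ustar → ∀ V ∈ Set.Ico V₀ (1 : ℝ), 0 < Ωsq u V)
    (hr_ge : ∀ u : ℝ, u ≤ ustar → ∀ V ∈ Set.Ico V₀ (1 : ℝ), rmin ≤ r u V)
    (h_liminf : ∀ u ∈ Set.Icc u₁ u₂,
      a ≤ Filter.liminf (fun V => (deriv (fun u' => φ u' V) u) ^ 2)
        (nhdsWithin 1 (Set.Iio 1)))
    (h_blowup : ∀ u : ℝ, u ≤ ustar →
      Tendsto (fun V => -deriv (r u) V / Ωsq u V)
        (nhdsWithin 1 (Set.Iio 1)) atTop)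
    (h_bdd_below : ∃ m : ℝ, ∀ V ∈ Set.Ico V₀ (1 : ℝ), m ≤ ϖ u₁ V) :
    ∀ M : ℝ, ∃ᶠ V in nhdsWithin 1 (Set.Iio 1), M ≤ ϖ u₂ V := by
  obtain ⟨m, hm⟩ := h_bdd_below
  have hdom : ∀ᶠ V in 𝓝[<] (1 : ℝ), V ∈ Ico V₀ 1 := Ico_mem_nhdsLT hV₀
  have hϖ' (V) (hV : V ∈ Ico V₀ 1) (u) (hu : u ∈ Icc u₁ u₂) : HasDerivAt (ϖ · V)
      (massFlux (r u V) (deriv (r u) V) (Ωsq u V) (deriv (φ · V) u)) u :=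
    h_eq u (hu.2.trans hu₂) V hV
  have hflux_nonneg (V) (hV : V ∈ Ico V₀ 1) (u) (hu : u ∈ Ioo u₁ u₂) : 0 ≤ deriv (ϖ · V) u :=
    (hϖ' V hV u (Ioo_subset_Icc_self hu)).deriv ▸
      massFlux_nonneg (h_dVr_neg u (hu.2.le.trans hu₂) V hV) (hΩ_pos u (hu.2.le.trans hu₂) V hV) _
  have hflux_blowup (u) (hu : u ∈ Ioo u₁ u₂) :
      Tendsto (fun V => deriv (ϖ · V) u) (𝓝[<] 1) atTop := by
    have hus : u ≤ ustar := hu.2.le.trans hu₂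
    refine (tendsto_massFlux_atTop hrmin ha (hdom.mono fun V hV => hr_ge u hus V hV)
      (h_liminf u (Ioo_subset_Icc_self hu)) (h_blowup u hus)).congr' ?_
    filter_upwards [hdom] with V hV
    exact (hϖ' V hV u (Ioo_subset_Icc_self hu)).deriv.symm
  have hϖ : Tendsto (ϖ u₂) (𝓝[<] 1) atTop := by
    refine tendsto_atTop_mono' _ ?_ (tendsto_atTop_add_const_left _ m
      (tendsto_sub_atTop_of_tendsto_deriv_atTop (hu₁.trans hu₀)
        (hdom.mono fun V hV u hu => (hϖ' V hV u hu).differentiableAt)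
        (hdom.mono hflux_nonneg) hflux_blowup))
    filter_upwards [hdom] with V hV
    linarith [hm V hV]
  exact fun M => (hϖ.eventually_ge_atTop M).frequently
end

section
/- Let ρ > 11/4 and σ > 1 with 10 + σ − 4ρ < 0 and 2ρ − σ > 1, let u_s ≤ −1 and κ₋ > 0. Suppose |F(u,v)| ≤ C v^{-2ρ} for u + v ≤ 0 and |F(u,v)| ≤ C Ω^{-2}(u,v) |u|^{-ρ} v^{-ρ} for u + v ≥ 0, where c e^{-2κ₋(u+v)} ≤ Ω²(u,v) ≤ C e^{-2κ₋(u+v)} when u+v ≥ 0 and Ω²(u,v) ≤ C e^{2κ₊(u+v)} when u+v ≤ 0 for some κ₊ > 0. Then the weighted norm ∫_1^∞ ∫_{-∞}^{u_s} |u|^8 |F(u,v)|² Ω⁴(u,v) (1+|u+v|)^σ du dv is finite. -/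
open MeasureTheory

private lemma lint_ofReal_lt_top_aux {f : ℝ → ℝ} {s : Set ℝ}
    (h : MeasureTheory.IntegrableOn f s) :
    ∫⁻ x in s, ENNReal.ofReal (f x) < ⊤ :=
  lt_of_le_of_lt (lintegral_mono fun x => Real.ofReal_le_enorm (f x)) h.hasFiniteIntegral

private lemma lint_Iio_neg_aux (c : ℝ) (f : ℝ → ENNReal) (hf : Measurable f) :
    ∫⁻ x in Set.Iio c, f (-x) = ∫⁻ y in Set.Ioi (-c), f y := by
  have h := setLIntegral_map (μ := (volume : Measure ℝ)) (s := Set.Ioi (-c))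
    measurableSet_Ioi hf measurable_neg
  rw [Measure.map_neg_eq_self (volume : Measure ℝ)] at h
  have hpre : (fun x : ℝ => -x) ⁻¹' Set.Ioi (-c) = Set.Iio c := by
    ext x; simp
  rw [h, hpre]

private lemma lint_cauchy_aux (s : Set ℝ) (w : ℝ) :
    ∫⁻ u in s, ENNReal.ofReal ((1 + (u + w) ^ 2)⁻¹) ≤ ENNReal.ofReal Real.pi := by
  calc ∫⁻ u in s, ENNReal.ofReal ((1 + (u + w) ^ 2)⁻¹)
      ≤ ∫⁻ u, ENNReal.ofReal ((1 + (u + w) ^ 2)⁻¹) := setLIntegral_le_lintegral _ _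
    _ = ∫⁻ u, ENNReal.ofReal ((1 + u ^ 2)⁻¹) :=
        lintegral_add_right_eq_self (fun u => ENNReal.ofReal ((1 + u ^ 2)⁻¹)) w
    _ = ENNReal.ofReal (∫ u, (1 + u ^ 2)⁻¹) :=
        (ofReal_integral_eq_lintegral_ofReal integrable_inv_one_add_sq
          (Filter.Eventually.of_forall fun x => by positivity)).symm
    _ = ENNReal.ofReal Real.pi := by rw [integral_univ_inv_one_add_sq]

private lemma rpow_sq_aux (v p : ℝ) (hv : 0 < v) : (v ^ p) ^ (2 : ℕ) = v ^ (2 * p) := by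
  rw [← Real.rpow_natCast (v ^ p) 2, ← Real.rpow_mul hv.le]
  norm_num [mul_comm]

set_option maxHeartbeats 2000000 in
/-- finiteness of the weighted inhomogeneous norm
`∫∫ |u|^8 |F|² Ω⁴ (1+|u+v|)^σ du dv` under the pointwise bounds on `F`
coming from the stability estimates, for `ρ > 11/4`, `σ > 1` with
`10 + σ − 4ρ < 0` and `2ρ − σ > 1`. -/
theorem inhomogeneous_norm_finite (ρ σ u_s κm κp c C : ℝ)
    (F Ωsq : ℝ → ℝ → ℝ)
    (hρ : 11 / 4 < ρ) (hσ : 1 < σ) (h1 : 10 + σ - 4 * ρ < 0)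
    (h2 : 1 < 2 * ρ - σ) (hus : u_s ≤ -1) (hκm : 0 < κm) (hκp : 0 < κp)
    (hc : 0 < c) (hC : 0 < C) (hcC : c ≤ C)
    (hΩ_pos : ∀ u v : ℝ, u ≤ u_s → 1 ≤ v → 0 < Ωsq u v)
    (hΩ_lower : ∀ u v : ℝ, u ≤ u_s → 1 ≤ v → 0 ≤ u + v →
      c * Real.exp (-2 * κm * (u + v)) ≤ Ωsq u v)
    (hΩ_upper : ∀ u v : ℝ, u ≤ u_s → 1 ≤ v → 0 ≤ u + v →
      Ωsq u v ≤ C * Real.exp (-2 * κm * (u + v)))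
    (hΩ_past : ∀ u v : ℝ, u ≤ u_s → 1 ≤ v → u + v ≤ 0 →
      Ωsq u v ≤ C * Real.exp (2 * κp * (u + v)))
    (hF_past : ∀ u v : ℝ, u ≤ u_s → 1 ≤ v → u + v ≤ 0 →
      |F u v| ≤ C * v ^ (-2 * ρ))
    (hF_future : ∀ u v : ℝ, u ≤ u_s → 1 ≤ v → 0 ≤ u + v →
      |F u v| ≤ C * (Ωsq u v)⁻¹ * |u| ^ (-ρ) * v ^ (-ρ)) :
    (∫⁻ v in Set.Ioi (1 : ℝ), ∫⁻ u in Set.Iio u_s,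
        ENNReal.ofReal
          (|u| ^ (8 : ℕ) * (F u v) ^ 2 * (Ωsq u v) ^ 2 * (1 + |u + v|) ^ σ))
      < ⊤ := by
  -- exponent bookkeeping
  set a : ℝ := min (2 * ρ - σ) ((4 * ρ - σ - 8) / 2) with ha_def
  have ha1 : 1 < a := lt_min h2 (by linarith)
  have ha2 : a ≤ 2 * ρ - σ := min_le_left _ _
  have ha3 : 8 + σ - 4 * ρ + a < -1 := by
    rcases min_cases (2 * ρ - σ) ((4 * ρ - σ - 8) / 2) with ⟨h3, h4⟩ | ⟨h3, h4⟩ <;>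
      rw [ha_def, h3] <;> linarith
  set q : ℝ := 10 + σ with hq_def
  have hq : 0 < q := by rw [hq_def]; linarith
  set δ : ℝ := min 1 (4 * κp / q) with hδ_def
  have hδ0 : 0 < δ := lt_min one_pos (by positivity)
  have hδ1 : δ ≤ 1 := min_le_left _ _
  have hδκ : q * δ ≤ 4 * κp := by
    have h' : δ ≤ 4 * κp / q := min_le_right _ _
    calc q * δ ≤ q * (4 * κp / q) := by
          exact mul_le_mul_of_nonneg_left h' hq.le
      _ = 4 * κp := by field_simp
  set K1 : ℝ := C ^ 4 * δ ^ (-q) with hK1_def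
  have hK1nn : 0 ≤ K1 := by
    rw [hK1_def]; positivity
  set e2 : ℝ := 8 + σ - 4 * ρ + a with he2_def
  set b : ℝ := 8 - 4 * ρ with hb_def
  have hb : b < -1 := by rw [hb_def]; linarith
  -- pointwise bound
  have key : ∀ u ∈ Set.Iio u_s, ∀ v ∈ Set.Ioi (1 : ℝ),
      |u| ^ (8 : ℕ) * (F u v) ^ 2 * (Ωsq u v) ^ 2 * (1 + |u + v|) ^ σ ≤
        K1 * (v ^ b * (1 + (u + v) ^ 2)⁻¹) + C ^ 2 * ((-u) ^ e2 * v ^ (-a)) := by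
    intro u hu v hv
    have huu : u ≤ u_s := le_of_lt hu
    have hv1 : (1 : ℝ) ≤ v := le_of_lt hv
    have hv0 : (0 : ℝ) < v := lt_trans one_pos hv
    have hu1 : u ≤ -1 := le_trans huu hus
    have hnu0 : (0 : ℝ) < -u := by linarith
    have habsu : |u| = -u := abs_of_neg (by linarith)
    have hΩ0 : 0 < Ωsq u v := hΩ_pos u v huu hv1
    have hRHS1nn : 0 ≤ K1 * (v ^ b * (1 + (u + v) ^ 2)⁻¹) := by
      apply mul_nonneg hK1nn
      positivity
    have hRHS2nn : 0 ≤ C ^ 2 * ((-u) ^ e2 * v ^ (-a)) := by positivity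
    rcases le_total (u + v) 0 with hp | hf
    · -- past region
      set x : ℝ := -(u + v) with hx_def
      have hx0 : 0 ≤ x := by rw [hx_def]; linarith
      have h1x : (0 : ℝ) < 1 + x := by linarith
      have habsuv : |u + v| = x := abs_of_nonpos hp
      have hb1 : (F u v) ^ 2 ≤ C ^ 2 * v ^ (2 * (-2 * ρ)) := by
        rw [← sq_abs]
        calc |F u v| ^ 2 ≤ (C * v ^ (-2 * ρ)) ^ 2 :=
              pow_le_pow_left₀ (abs_nonneg _) (hF_past u v huu hv1 hp) 2
          _ = C ^ 2 * v ^ (2 * (-2 * ρ)) := by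
              rw [mul_pow, rpow_sq_aux v (-2 * ρ) hv0]
      have hb2 : (Ωsq u v) ^ 2 ≤ C ^ 2 * Real.exp (-(4 * κp) * x) := by
        calc (Ωsq u v) ^ 2 ≤ (C * Real.exp (2 * κp * (u + v))) ^ 2 :=
              pow_le_pow_left₀ hΩ0.le (hΩ_past u v huu hv1 hp) 2
          _ = C ^ 2 * Real.exp (-(4 * κp) * x) := by
              have hex : Real.exp (2 * κp * (u + v)) ^ 2 = Real.exp (-(4 * κp) * x) := by
                rw [pow_two, ← Real.exp_add, hx_def]
                congr 1
                ring
              rw [mul_pow, hex]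
      have hb3 : |u| ^ (8 : ℕ) ≤ (v * (1 + x)) ^ (8 : ℕ) := by
        rw [habsu]
        apply pow_le_pow_left₀ hnu0.le
        have hkey : 0 ≤ (v - 1) * (-(u + v)) :=
          mul_nonneg (by linarith) (by linarith)
        rw [hx_def]; nlinarith [hkey]
      have hpoly : (1 + x) ^ (8 : ℕ) * (1 + x) ^ σ * Real.exp (-(4 * κp) * x) ≤
          δ ^ (-q) * (1 + (u + v) ^ 2)⁻¹ := by
        have e1 : (1 + x) ≤ δ⁻¹ * Real.exp (δ * x) := by
          have hδi : 1 ≤ δ⁻¹ := one_le_inv_iff₀.mpr ⟨hδ0, hδ1⟩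
          have hexp : 1 + δ * x ≤ Real.exp (δ * x) := by
            linarith [Real.add_one_le_exp (δ * x)]
          calc (1 : ℝ) + x ≤ δ⁻¹ + x := by linarith
            _ = δ⁻¹ * (1 + δ * x) := by field_simp
            _ ≤ δ⁻¹ * Real.exp (δ * x) := by
                apply mul_le_mul_of_nonneg_left hexp (by positivity)
        have e2' : (1 + x) ^ q ≤ δ ^ (-q) * Real.exp (4 * κp * x) := by
          calc (1 + x) ^ q ≤ (δ⁻¹ * Real.exp (δ * x)) ^ q :=
                Real.rpow_le_rpow (by linarith) e1 hq.le
            _ = δ ^ (-q) * Real.exp (δ * x * q) := by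
                rw [Real.mul_rpow (by positivity) (Real.exp_nonneg _),
                  ← Real.exp_mul, Real.inv_rpow hδ0.le, ← Real.rpow_neg hδ0.le]
            _ ≤ δ ^ (-q) * Real.exp (4 * κp * x) := by
                apply mul_le_mul_of_nonneg_left _ (by positivity)
                apply Real.exp_le_exp.mpr
                nlinarith [mul_le_mul_of_nonneg_right hδκ hx0]
        have hsplit : (1 + x) ^ (8 : ℕ) * (1 + x) ^ σ =
            (1 + x) ^ q * ((1 + x) ^ (2 : ℕ))⁻¹ := by
          rw [← Real.rpow_natCast (1 + x) 8, ← Real.rpow_add h1x,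
            ← Real.rpow_natCast (1 + x) 2, ← Real.rpow_neg_one,
            ← Real.rpow_mul h1x.le, ← Real.rpow_add h1x, hq_def]
          congr 1
          push_cast
          ring
        have hinv : ((1 + x) ^ (2 : ℕ))⁻¹ ≤ (1 + (u + v) ^ 2)⁻¹ := by
          have h2' : 1 + (u + v) ^ 2 ≤ (1 + x) ^ 2 := by
            rw [hx_def]; nlinarith [hx0]
          have hpos : (0 : ℝ) < 1 + (u + v) ^ 2 := by positivity
          exact inv_anti₀ hpos h2'
        calc (1 + x) ^ (8 : ℕ) * (1 + x) ^ σ * Real.exp (-(4 * κp) * x)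
            = ((1 + x) ^ q * Real.exp (-(4 * κp) * x)) * ((1 + x) ^ (2 : ℕ))⁻¹ := by
              rw [hsplit]; ring
          _ ≤ ((δ ^ (-q) * Real.exp (4 * κp * x)) * Real.exp (-(4 * κp) * x)) *
                ((1 + x) ^ (2 : ℕ))⁻¹ := by
              apply mul_le_mul_of_nonneg_right _ (by positivity)
              exact mul_le_mul_of_nonneg_right e2' (Real.exp_nonneg _)
          _ = δ ^ (-q) * ((1 + x) ^ (2 : ℕ))⁻¹ := by
              rw [mul_assoc (δ ^ (-q)), ← Real.exp_add]
              ring_nf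
              rw [Real.exp_zero]; ring
          _ ≤ δ ^ (-q) * (1 + (u + v) ^ 2)⁻¹ :=
              mul_le_mul_of_nonneg_left hinv (by positivity)
      have step1 : |u| ^ (8 : ℕ) * (F u v) ^ 2 * (Ωsq u v) ^ 2 * (1 + |u + v|) ^ σ ≤
          ((v * (1 + x)) ^ (8 : ℕ)) * (C ^ 2 * v ^ (2 * (-2 * ρ))) *
            (C ^ 2 * Real.exp (-(4 * κp) * x)) * (1 + x) ^ σ := by
        rw [habsuv]
        have h1nn : (0 : ℝ) ≤ (1 + x) ^ σ := Real.rpow_nonneg (by linarith) _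
        apply mul_le_mul_of_nonneg_right _ h1nn
        apply mul_le_mul _ hb2 (sq_nonneg _) (by positivity)
        exact mul_le_mul hb3 hb1 (sq_nonneg _) (by positivity)
      calc |u| ^ (8 : ℕ) * (F u v) ^ 2 * (Ωsq u v) ^ 2 * (1 + |u + v|) ^ σ
          ≤ ((v * (1 + x)) ^ (8 : ℕ)) * (C ^ 2 * v ^ (2 * (-2 * ρ))) *
              (C ^ 2 * Real.exp (-(4 * κp) * x)) * (1 + x) ^ σ := step1
        _ = (C ^ 4 * (v ^ (8 : ℕ) * v ^ (2 * (-2 * ρ)))) *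
              ((1 + x) ^ (8 : ℕ) * (1 + x) ^ σ * Real.exp (-(4 * κp) * x)) := by
            rw [mul_pow]; ring
        _ = (C ^ 4 * v ^ b) *
              ((1 + x) ^ (8 : ℕ) * (1 + x) ^ σ * Real.exp (-(4 * κp) * x)) := by
            have hvv : (v : ℝ) ^ (8 : ℕ) * v ^ (2 * (-2 * ρ)) = v ^ b := by
              rw [← Real.rpow_natCast v 8, ← Real.rpow_add hv0, hb_def]
              congr 1
              push_cast
              ring
            rw [hvv]
        _ ≤ (C ^ 4 * v ^ b) * (δ ^ (-q) * (1 + (u + v) ^ 2)⁻¹) := by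
            apply mul_le_mul_of_nonneg_left hpoly (by positivity)
        _ = K1 * (v ^ b * (1 + (u + v) ^ 2)⁻¹) := by rw [hK1_def]; ring
        _ ≤ K1 * (v ^ b * (1 + (u + v) ^ 2)⁻¹) + C ^ 2 * ((-u) ^ e2 * v ^ (-a)) :=
            le_add_of_nonneg_right hRHS2nn
    · -- future region
      have habsuv : |u + v| = u + v := abs_of_nonneg hf
      have hnuv : -u ≤ v := by linarith
      have hFf : |F u v| ≤ C * (Ωsq u v)⁻¹ * (-u) ^ (-ρ) * v ^ (-ρ) := by
        rw [← habsu]; exact hF_future u v huu hv1 hf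
      have hb1 : (F u v) ^ 2 * (Ωsq u v) ^ 2 ≤
          C ^ 2 * ((-u) ^ (2 * -ρ) * v ^ (2 * -ρ)) := by
        have hF2 : (F u v) ^ 2 ≤ (C * (Ωsq u v)⁻¹ * (-u) ^ (-ρ) * v ^ (-ρ)) ^ 2 := by
          rw [← sq_abs]; exact pow_le_pow_left₀ (abs_nonneg _) hFf 2
        calc (F u v) ^ 2 * (Ωsq u v) ^ 2
            ≤ (C * (Ωsq u v)⁻¹ * (-u) ^ (-ρ) * v ^ (-ρ)) ^ 2 * (Ωsq u v) ^ 2 :=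
              mul_le_mul_of_nonneg_right hF2 (sq_nonneg _)
          _ = C ^ 2 * (((-u) ^ (-ρ)) ^ (2 : ℕ) * (v ^ (-ρ)) ^ (2 : ℕ)) *
                ((Ωsq u v)⁻¹ * Ωsq u v) ^ (2 : ℕ) := by ring
          _ = C ^ 2 * ((-u) ^ (2 * -ρ) * v ^ (2 * -ρ)) := by
              rw [inv_mul_cancel₀ hΩ0.ne', rpow_sq_aux (-u) (-ρ) hnu0,
                rpow_sq_aux v (-ρ) hv0]
              ring
      have hσexp : (1 + (u + v)) ^ σ ≤ v ^ σ :=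
        Real.rpow_le_rpow (by linarith) (by linarith) (by linarith)
      calc |u| ^ (8 : ℕ) * (F u v) ^ 2 * (Ωsq u v) ^ 2 * (1 + |u + v|) ^ σ
          = (-u) ^ (8 : ℕ) * ((F u v) ^ 2 * (Ωsq u v) ^ 2) * (1 + (u + v)) ^ σ := by
            rw [habsu, habsuv]; ring
        _ ≤ (-u) ^ (8 : ℕ) * (C ^ 2 * ((-u) ^ (2 * -ρ) * v ^ (2 * -ρ))) * v ^ σ := by
            apply mul_le_mul _ hσexp (Real.rpow_nonneg (by linarith) _) (by positivity)
            exact mul_le_mul_of_nonneg_left hb1 (by positivity)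
        _ = C ^ 2 * (((-u) ^ (8 : ℕ) * (-u) ^ (2 * -ρ)) * (v ^ (2 * -ρ) * v ^ σ)) := by
            ring
        _ = C ^ 2 * ((-u) ^ (8 + 2 * -ρ) * (v ^ (σ - 2 * ρ + a) * v ^ (-a))) := by
            have huu8 : (-u) ^ (8 : ℕ) * (-u) ^ (2 * -ρ) = (-u) ^ (8 + 2 * -ρ) := by
              rw [← Real.rpow_natCast (-u) 8, ← Real.rpow_add hnu0]
              norm_num
            have hvv : v ^ (2 * -ρ) * v ^ σ = v ^ (σ - 2 * ρ + a) * v ^ (-a) := by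
              rw [← Real.rpow_add hv0, ← Real.rpow_add hv0]
              congr 1
              ring
            rw [huu8, hvv]
        _ ≤ C ^ 2 * ((-u) ^ (8 + 2 * -ρ) * ((-u) ^ (σ - 2 * ρ + a) * v ^ (-a))) := by
            apply mul_le_mul_of_nonneg_left _ (by positivity)
            apply mul_le_mul_of_nonneg_left _ (Real.rpow_nonneg hnu0.le _)
            apply mul_le_mul_of_nonneg_right _ (Real.rpow_nonneg hv0.le _)
            exact Real.rpow_le_rpow_of_nonpos hnu0 hnuv (by linarith)
        _ = C ^ 2 * ((-u) ^ e2 * v ^ (-a)) := by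
            rw [← mul_assoc ((-u) ^ (8 + 2 * -ρ)), ← Real.rpow_add hnu0, he2_def]
            congr 2
            ring
        _ ≤ K1 * (v ^ b * (1 + (u + v) ^ 2)⁻¹) + C ^ 2 * ((-u) ^ e2 * v ^ (-a)) :=
            le_add_of_nonneg_left hRHS1nn
  -- the u-integral of the second piece
  set Lu : ENNReal := ∫⁻ u in Set.Iio u_s, ENNReal.ofReal ((-u) ^ e2) with hLu_def
  have hLu : Lu < ⊤ := by
    rw [hLu_def, lint_Iio_neg_aux u_s (fun y => ENNReal.ofReal (y ^ e2)) (by fun_prop)]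
    exact lint_ofReal_lt_top_aux
      (integrableOn_Ioi_rpow_of_lt ha3 (by linarith : (0 : ℝ) < -u_s))
  have hLune : Lu ≠ ⊤ := hLu.ne
  -- main estimate
  have main : (∫⁻ v in Set.Ioi (1 : ℝ), ∫⁻ u in Set.Iio u_s,
      ENNReal.ofReal
        (|u| ^ (8 : ℕ) * (F u v) ^ 2 * (Ωsq u v) ^ 2 * (1 + |u + v|) ^ σ)) ≤
      (∫⁻ v in Set.Ioi (1 : ℝ),
        ENNReal.ofReal (K1 * v ^ b) * ENNReal.ofReal Real.pi) +
      ∫⁻ v in Set.Ioi (1 : ℝ), ENNReal.ofReal (C ^ 2 * v ^ (-a)) * Lu := by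
    have step : (∫⁻ v in Set.Ioi (1 : ℝ), ∫⁻ u in Set.Iio u_s,
        ENNReal.ofReal
          (|u| ^ (8 : ℕ) * (F u v) ^ 2 * (Ωsq u v) ^ 2 * (1 + |u + v|) ^ σ)) ≤
        ∫⁻ v in Set.Ioi (1 : ℝ),
          (ENNReal.ofReal (K1 * v ^ b) * ENNReal.ofReal Real.pi +
            ENNReal.ofReal (C ^ 2 * v ^ (-a)) * Lu) := by
      refine lintegral_mono_ae ((ae_restrict_mem measurableSet_Ioi).mono fun v hv => ?_)
      have hv0 : (0 : ℝ) < v := lt_trans one_pos hv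
      calc ∫⁻ u in Set.Iio u_s,
            ENNReal.ofReal
              (|u| ^ (8 : ℕ) * (F u v) ^ 2 * (Ωsq u v) ^ 2 * (1 + |u + v|) ^ σ)
          ≤ ∫⁻ u in Set.Iio u_s,
              (ENNReal.ofReal (K1 * (v ^ b * (1 + (u + v) ^ 2)⁻¹)) +
                ENNReal.ofReal (C ^ 2 * ((-u) ^ e2 * v ^ (-a)))) := by
            refine lintegral_mono_ae
              ((ae_restrict_mem measurableSet_Iio).mono fun u hu => ?_)
            exact le_trans (ENNReal.ofReal_le_ofReal (key u hu v hv))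
              ENNReal.ofReal_add_le
        _ = (∫⁻ u in Set.Iio u_s,
              ENNReal.ofReal (K1 * (v ^ b * (1 + (u + v) ^ 2)⁻¹))) +
            ∫⁻ u in Set.Iio u_s,
              ENNReal.ofReal (C ^ 2 * ((-u) ^ e2 * v ^ (-a))) :=
            lintegral_add_left (by fun_prop) _
        _ ≤ ENNReal.ofReal (K1 * v ^ b) * ENNReal.ofReal Real.pi +
            ENNReal.ofReal (C ^ 2 * v ^ (-a)) * Lu := by
            apply add_le_add
            · calc ∫⁻ u in Set.Iio u_s,
                  ENNReal.ofReal (K1 * (v ^ b * (1 + (u + v) ^ 2)⁻¹))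
                  = ∫⁻ u in Set.Iio u_s,
                      ENNReal.ofReal (K1 * v ^ b) *
                        ENNReal.ofReal ((1 + (u + v) ^ 2)⁻¹) := by
                    refine lintegral_congr fun u => ?_
                    rw [← ENNReal.ofReal_mul
                      (mul_nonneg hK1nn (Real.rpow_nonneg hv0.le _))]
                    congr 1
                    rw [hK1_def]
                    ring
                _ = ENNReal.ofReal (K1 * v ^ b) *
                      ∫⁻ u in Set.Iio u_s, ENNReal.ofReal ((1 + (u + v) ^ 2)⁻¹) :=
                    lintegral_const_mul' _ _ ENNReal.ofReal_ne_top
                _ ≤ ENNReal.ofReal (K1 * v ^ b) * ENNReal.ofReal Real.pi :=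
                    mul_le_mul_right (lint_cauchy_aux _ _) _
            · calc ∫⁻ u in Set.Iio u_s,
                  ENNReal.ofReal (C ^ 2 * ((-u) ^ e2 * v ^ (-a)))
                  = ∫⁻ u in Set.Iio u_s,
                      ENNReal.ofReal (C ^ 2 * v ^ (-a)) *
                        ENNReal.ofReal ((-u) ^ e2) := by
                    refine lintegral_congr fun u => ?_
                    rw [← ENNReal.ofReal_mul
                      (mul_nonneg (by positivity) (Real.rpow_nonneg hv0.le _))]
                    congr 1
                    ring
                _ = ENNReal.ofReal (C ^ 2 * v ^ (-a)) * Lu :=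
                    lintegral_const_mul' _ _ ENNReal.ofReal_ne_top
                _ ≤ ENNReal.ofReal (C ^ 2 * v ^ (-a)) * Lu := le_rfl
    calc (∫⁻ v in Set.Ioi (1 : ℝ), ∫⁻ u in Set.Iio u_s,
        ENNReal.ofReal
          (|u| ^ (8 : ℕ) * (F u v) ^ 2 * (Ωsq u v) ^ 2 * (1 + |u + v|) ^ σ))
        ≤ ∫⁻ v in Set.Ioi (1 : ℝ),
            (ENNReal.ofReal (K1 * v ^ b) * ENNReal.ofReal Real.pi +
              ENNReal.ofReal (C ^ 2 * v ^ (-a)) * Lu) := step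
      _ = (∫⁻ v in Set.Ioi (1 : ℝ),
            ENNReal.ofReal (K1 * v ^ b) * ENNReal.ofReal Real.pi) +
          ∫⁻ v in Set.Ioi (1 : ℝ), ENNReal.ofReal (C ^ 2 * v ^ (-a)) * Lu :=
          lintegral_add_left (by fun_prop) _
  refine lt_of_le_of_lt main (ENNReal.add_lt_top.mpr ⟨?_, ?_⟩)
  · have heq : (∫⁻ v in Set.Ioi (1 : ℝ),
        ENNReal.ofReal (K1 * v ^ b) * ENNReal.ofReal Real.pi) =
        (ENNReal.ofReal K1 * ENNReal.ofReal Real.pi) *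
          ∫⁻ v in Set.Ioi (1 : ℝ), ENNReal.ofReal (v ^ b) := by
      rw [← lintegral_const_mul' _ _
        (ENNReal.mul_ne_top ENNReal.ofReal_ne_top ENNReal.ofReal_ne_top)]
      refine lintegral_congr fun v => ?_
      rw [ENNReal.ofReal_mul hK1nn]
      ring
    rw [heq]
    exact ENNReal.mul_lt_top (by finiteness)
      (lint_ofReal_lt_top_aux (integrableOn_Ioi_rpow_of_lt hb one_pos))
  · have heq : (∫⁻ v in Set.Ioi (1 : ℝ),
        ENNReal.ofReal (C ^ 2 * v ^ (-a)) * Lu) =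
        (ENNReal.ofReal (C ^ 2) * Lu) *
          ∫⁻ v in Set.Ioi (1 : ℝ), ENNReal.ofReal (v ^ (-a)) := by
      rw [← lintegral_const_mul' _ _
        (ENNReal.mul_ne_top ENNReal.ofReal_ne_top hLune)]
      refine lintegral_congr fun v => ?_
      rw [ENNReal.ofReal_mul (by positivity)]
      ring
    rw [heq]
    exact ENNReal.mul_lt_top
      (ENNReal.mul_lt_top ENNReal.ofReal_lt_top hLu)
      (lint_ofReal_lt_top_aux
        (integrableOn_Ioi_rpow_of_lt (by linarith : -a < -1) one_pos))
end
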